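/- arXiv:1010.4129 — 3 statements merged into one kernel-verified Lean document; each statement's English description precedes it below -/
import Mathlib

section
/- Let σ ⊆ ℝ^m be a closed convex polyhedral cone and σ∨ its dual cone. Then the map sending a face τ of σ to τ* := σ∨ ∩ τ^⊥ is an inclusion-reversing bijection between the faces of σ and the faces of σ∨. -/
/-- A polyhedral cone: the set of nonnegative combinations of a finite set of vectors. -/
def IsPolyhedralCone {m : ℕ} (σ : Set (EuclideanSpace ℝ (Fin m))) : Prop :=
  ∃ s : Finset (EuclideanSpace ℝ (Fin m)),
    σ = {x | ∃ c : EuclideanSpace ℝ (Fin m) → ℝ,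
      (∀ v ∈ s, 0 ≤ c v) ∧ x = ∑ v ∈ s, c v • v}

/-- The dual cone of σ (identifying (ℝ^m)* with ℝ^m via the inner product). -/
def dualCone {m : ℕ} (σ : Set (EuclideanSpace ℝ (Fin m))) : Set (EuclideanSpace ℝ (Fin m)) :=
  {y | ∀ x ∈ σ, 0 ≤ (inner ℝ x y : ℝ)}

/-- τ^⊥: the set of linear functionals (vectors) vanishing on τ. -/
def perpSet {m : ℕ} (τ : Set (EuclideanSpace ℝ (Fin m))) : Set (EuclideanSpace ℝ (Fin m)) :=
  {y | ∀ x ∈ τ, (inner ℝ x y : ℝ) = 0}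

/-- A face of a cone: the cone itself, or its intersection with a supporting hyperplane. -/
def IsFaceOf {m : ℕ} (F σ : Set (EuclideanSpace ℝ (Fin m))) : Prop :=
  F = σ ∨ ∃ y : EuclideanSpace ℝ (Fin m),
    (∀ x ∈ σ, 0 ≤ (inner ℝ y x : ℝ)) ∧ F = σ ∩ {x | (inner ℝ y x : ℝ) = 0}

/-!
A finitely generated cone `σ` is closed: by the conic Carathéodory theorem every point of `σ` lies
in the cone over a linearly independent subset of the generators, and such a cone is the image of
an orthant under an injective linear map. Hence `σ∨∨ = σ`.

For any set `D` and any set `F` of functionals nonnegative on `D`, the set `D ∩ F^⊥` is an exposed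
face of `D`: finitely many members of `F` span the same space as `F`, and their sum exposes it.
So `τ ↦ τ*` sends faces to faces. A face `τ = σ ∩ y^⊥` is recovered as `σ ∩ (τ*)^⊥`, because
`y ∈ τ*`; this gives injectivity and order reversal, and the same recovery applied to `σ∨`,
together with `σ∨∨ = σ`, gives surjectivity.
-/

open Finset

namespace PointedCone

variable {E : Type*} [AddCommGroup E] [Module ℝ E]

theorem mem_hull_finset_iff {s : Finset E} {x : E} :
    x ∈ hull ℝ (s : Set E) ↔ ∃ c : E → ℝ, (∀ v ∈ s, 0 ≤ c v) ∧ ∑ v ∈ s, c v • v = x := by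
  constructor
  · intro hx
    obtain ⟨f, -, rfl⟩ := Submodule.mem_span_finset.1 hx
    exact ⟨fun v => f v, fun v _ => (f v).2, rfl⟩
  · rintro ⟨c, hc, rfl⟩
    exact Submodule.sum_mem _ fun v hv => smul_mem _ (hc v hv) (subset_hull hv)

theorem mem_hull_erase_of_sum_smul_eq_zero [DecidableEq E] {s : Finset E} {c d : E → ℝ}
    (hc : ∀ v ∈ s, 0 ≤ c v) (hd : ∑ v ∈ s, d v • v = 0) (hpos : ∃ v ∈ s, 0 < d v) :
    ∃ v₀ ∈ s, ∑ v ∈ s, c v • v ∈ hull ℝ (s.erase v₀ : Set E) := by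
  -- Subtract the largest multiple `r • d` that keeps the coefficients nonnegative.
  obtain ⟨v₀, hv₀, hmin⟩ := (s.filter (0 < d ·)).exists_min_image (fun v => c v / d v)
    (by simpa [Finset.Nonempty] using hpos)
  obtain ⟨hv₀s, hdv₀⟩ := mem_filter.1 hv₀
  set r := c v₀ / d v₀
  have hc' : ∀ v ∈ s, 0 ≤ c v - r * d v := by
    intro v hv
    rcases lt_or_ge 0 (d v) with hdv | hdv
    · have := hmin v (mem_filter.2 ⟨hv, hdv⟩)
      rw [le_div_iff₀ hdv] at this
      linarith
    · nlinarith [hc v hv, div_nonneg (hc v₀ hv₀s) hdv₀.le]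
  refine ⟨v₀, hv₀s, mem_hull_finset_iff.2 ⟨fun v => c v - r * d v,
    fun v hv => hc' v (mem_of_mem_erase hv), ?_⟩⟩
  rw [sum_erase _ (by simp [r, div_mul_cancel₀ _ hdv₀.ne'])]
  simp only [sub_smul, sum_sub_distrib, mul_smul, ← smul_sum, hd, smul_zero, sub_zero]

theorem exists_linearIndepOn_of_mem_hull {s : Finset E} {x : E}
    (hx : x ∈ hull ℝ (s : Set E)) :
    ∃ t ⊆ s, LinearIndepOn ℝ id (t : Set E) ∧ x ∈ hull ℝ (t : Set E) := by
  induction s using Finset.strongInduction generalizing x with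
  | H s ih =>
  classical
  by_cases hs : LinearIndepOn ℝ id (s : Set E)
  · exact ⟨s, subset_rfl, hs, hx⟩
  obtain ⟨c, hc, rfl⟩ := mem_hull_finset_iff.1 hx
  obtain ⟨d, hd, v, hv, hdv⟩ : ∃ d : E → ℝ, ∑ v ∈ s, d v • v = 0 ∧ ∃ v ∈ s, 0 < d v := by
    simp only [linearIndepOn_finset_iff, id, not_forall] at hs
    obtain ⟨f, hf, v, hv, hfv⟩ := hs
    rcases Ne.lt_or_gt hfv with hneg | hpos
    · exact ⟨-f, by simp [neg_smul, hf], v, hv, by simpa using hneg⟩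
    · exact ⟨f, hf, v, hv, hpos⟩
  obtain ⟨v₀, hv₀, hmem⟩ := mem_hull_erase_of_sum_smul_eq_zero hc hd ⟨v, hv, hdv⟩
  obtain ⟨t, hts, ht, hxt⟩ := ih _ (erase_ssubset hv₀) hmem
  exact ⟨t, hts.trans (erase_subset _ _), ht, hxt⟩

variable [TopologicalSpace E] [IsTopologicalAddGroup E] [ContinuousSMul ℝ E] [T2Space E]

theorem isClosed_hull_of_linearIndepOn {t : Finset E} (ht : LinearIndepOn ℝ id (t : Set E)) :
    IsClosed (hull ℝ (t : Set E) : Set E) := by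
  set L := Fintype.linearCombination ℝ ((↑) : t → E)
  have hL : Function.Injective L := linearIndependent_iff_injective_fintypeLinearCombination.1 ht
  have himage : (hull ℝ (t : Set E) : Set E) = L '' Set.univ.pi fun _ => Set.Ici 0 := by
    ext x
    simp only [SetLike.mem_coe, Submodule.mem_span_finset', Set.mem_image, Set.mem_pi,
      Set.mem_univ, Set.mem_Ici, forall_const, L, Fintype.linearCombination_apply]
    constructor
    · rintro ⟨f, rfl⟩
      exact ⟨fun i => f i, fun i => (f i).2, rfl⟩
    · rintro ⟨c, hc, rfl⟩
      exact ⟨fun i => ⟨c i, hc i⟩, rfl⟩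
  rw [himage]
  exact (L.isClosedEmbedding_of_injective (LinearMap.ker_eq_bot.2 hL)).isClosedMap _
    (isClosed_set_pi fun _ _ => isClosed_Ici)

theorem isClosed_hull_finset (s : Finset E) : IsClosed (hull ℝ (s : Set E) : Set E) := by
  classical
  have hunion : (hull ℝ (s : Set E) : Set E) =
      ⋃ t ∈ s.powerset.filter fun t : Finset E => LinearIndepOn ℝ id (t : Set E),
        (hull ℝ (t : Set E) : Set E) := by
    ext x
    simp only [Set.mem_iUnion, mem_filter, mem_powerset, SetLike.mem_coe, exists_prop]
    constructor
    · intro hx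
      obtain ⟨t, hts, ht, hxt⟩ := exists_linearIndepOn_of_mem_hull hx
      exact ⟨t, ⟨hts, ht⟩, hxt⟩
    · rintro ⟨t, ⟨hts, -⟩, hxt⟩
      exact Submodule.span_mono (by exact_mod_cast hts) hxt
  rw [hunion]
  exact isClosed_biUnion_finset fun t ht => isClosed_hull_of_linearIndepOn (mem_filter.1 ht).2

end PointedCone

open scoped RealInnerProductSpace

section Faces

variable {m : ℕ}

theorem isPolyhedralCone_iff {σ : Set (EuclideanSpace ℝ (Fin m))} :
    IsPolyhedralCone σ ↔ ∃ s : Finset (EuclideanSpace ℝ (Fin m)),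
      σ = PointedCone.hull ℝ (s : Set (EuclideanSpace ℝ (Fin m))) := by
  simp only [IsPolyhedralCone, Set.ext_iff, SetLike.mem_coe, PointedCone.mem_hull_finset_iff,
    eq_comm (b := ∑ _ ∈ _, _)]
  rfl

theorem dualCone_dualCone_of_isClosed (C : PointedCone ℝ (EuclideanSpace ℝ (Fin m)))
    (hC : IsClosed (C : Set (EuclideanSpace ℝ (Fin m)))) :
    dualCone (dualCone (C : Set (EuclideanSpace ℝ (Fin m)))) = C :=
  congrArg SetLike.coe (ProperCone.innerDual_innerDual ⟨C, hC⟩)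

theorem dualCone_anti {σ τ : Set (EuclideanSpace ℝ (Fin m))} (h : τ ⊆ σ) :
    dualCone σ ⊆ dualCone τ :=
  fun _ hy x hx => hy x (h hx)

theorem perpSet_anti {σ τ : Set (EuclideanSpace ℝ (Fin m))} (h : τ ⊆ σ) :
    perpSet σ ⊆ perpSet τ :=
  fun _ hy x hx => hy x (h hx)

theorem perpSet_eq_of_span_eq {S T : Set (EuclideanSpace ℝ (Fin m))}
    (h : Submodule.span ℝ S = Submodule.span ℝ T) : perpSet S = perpSet T := by
  have hperp : ∀ U : Set (EuclideanSpace ℝ (Fin m)),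
      perpSet U = {y | Submodule.span ℝ U ⟂ Submodule.span ℝ {y}} := by
    intro U
    ext y
    simp [perpSet, Submodule.isOrtho_span]
  rw [hperp, hperp, h]

theorem IsFaceOf.subset {τ σ : Set (EuclideanSpace ℝ (Fin m))} (h : IsFaceOf τ σ) : τ ⊆ σ := by
  rcases h with rfl | ⟨y, -, rfl⟩
  exacts [subset_rfl, Set.inter_subset_left]

theorem isFaceOf_iff_exists_supporting {τ σ : Set (EuclideanSpace ℝ (Fin m))} :
    IsFaceOf τ σ ↔ ∃ y : EuclideanSpace ℝ (Fin m),
      (∀ x ∈ σ, 0 ≤ ⟪y, x⟫) ∧ τ = σ ∩ {x | ⟪y, x⟫ = 0} := by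
  refine ⟨?_, Or.inr⟩
  rintro (rfl | h)
  · exact ⟨0, by simp, by simp⟩
  · exact h

theorem inter_perpSet_finset_eq {D : Set (EuclideanSpace ℝ (Fin m))}
    {S : Finset (EuclideanSpace ℝ (Fin m))} (hD : D ⊆ dualCone S) :
    D ∩ perpSet S = D ∩ {x | ⟪∑ u ∈ S, u, x⟫ = 0} := by
  ext x
  simp only [Set.mem_inter_iff, perpSet, Set.mem_ofPred_eq, sum_inner, and_congr_right_iff]
  intro hx
  exact (sum_eq_zero_iff_of_nonneg fun u hu => hD hx u hu).symm

theorem isFaceOf_inter_perpSet {D F : Set (EuclideanSpace ℝ (Fin m))} (hD : D ⊆ dualCone F) :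
    IsFaceOf (D ∩ perpSet F) D := by
  obtain ⟨S, hSF, -, hspan, -⟩ := Submodule.exists_finset_span_eq_linearIndepOn ℝ F
  have hDS : D ⊆ dualCone S := hD.trans (dualCone_anti hSF)
  rw [← perpSet_eq_of_span_eq hspan, inter_perpSet_finset_eq hDS]
  refine Or.inr ⟨_, fun x hx => ?_, rfl⟩
  rw [sum_inner]
  exact sum_nonneg fun u hu => hDS hx u hu

theorem inter_perpSet_dualCone_inter_perpSet {τ σ : Set (EuclideanSpace ℝ (Fin m))}
    (h : IsFaceOf τ σ) : σ ∩ perpSet (dualCone σ ∩ perpSet τ) = τ := by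
  obtain ⟨y, hy, rfl⟩ := isFaceOf_iff_exists_supporting.1 h
  refine subset_antisymm (fun x ⟨hxσ, hx⟩ => ⟨hxσ, ?_⟩)
    fun x hx => ⟨hx.1, fun u hu => (real_inner_comm x u).trans (hu.2 x hx)⟩
  have hyσ : y ∈ dualCone σ := fun x hx => real_inner_comm x y ▸ hy x hx
  have hyτ : y ∈ perpSet (σ ∩ {x | ⟪y, x⟫ = 0}) := fun x hx => real_inner_comm x y ▸ hx.2
  exact hx y ⟨hyσ, hyτ⟩

variable {σ : Set (EuclideanSpace ℝ (Fin m))}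

theorem mapsTo_dualCone_inter_perpSet :
    Set.MapsTo (fun τ => dualCone σ ∩ perpSet τ)
      {τ | IsFaceOf τ σ} {τ' | IsFaceOf τ' (dualCone σ)} :=
  fun _ hτ => isFaceOf_inter_perpSet (dualCone_anti hτ.subset)

theorem injOn_dualCone_inter_perpSet :
    Set.InjOn (fun τ => dualCone σ ∩ perpSet τ) {τ | IsFaceOf τ σ} := fun τ₁ h₁ τ₂ h₂ h => by
  rw [← inter_perpSet_dualCone_inter_perpSet h₁, ← inter_perpSet_dualCone_inter_perpSet h₂]
  exact congrArg (σ ∩ perpSet ·) h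

theorem surjOn_dualCone_inter_perpSet (hσ : dualCone (dualCone σ) = σ) :
    Set.SurjOn (fun τ => dualCone σ ∩ perpSet τ)
      {τ | IsFaceOf τ σ} {τ' | IsFaceOf τ' (dualCone σ)} := fun F hF => by
  refine ⟨σ ∩ perpSet F, ?_, ?_⟩
  · have hface := mapsTo_dualCone_inter_perpSet hF
    rwa [hσ] at hface
  · have hrecover := inter_perpSet_dualCone_inter_perpSet hF
    rwa [hσ] at hrecover

theorem dualCone_inter_perpSet_subset_iff {τ₁ τ₂ : Set (EuclideanSpace ℝ (Fin m))}
    (h₁ : IsFaceOf τ₁ σ) (h₂ : IsFaceOf τ₂ σ) :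
    dualCone σ ∩ perpSet τ₂ ⊆ dualCone σ ∩ perpSet τ₁ ↔ τ₁ ⊆ τ₂ := by
  refine ⟨fun h => ?_, fun h => Set.inter_subset_inter_right _ (perpSet_anti h)⟩
  rw [← inter_perpSet_dualCone_inter_perpSet h₁, ← inter_perpSet_dualCone_inter_perpSet h₂]
  exact Set.inter_subset_inter_right _ (perpSet_anti h)

end Faces

theorem stmt_0 {m : ℕ} (σ : Set (EuclideanSpace ℝ (Fin m)))
    (hσ : IsPolyhedralCone σ) :
    Set.BijOn (fun τ => dualCone σ ∩ perpSet τ)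
      {τ | IsFaceOf τ σ} {τ' | IsFaceOf τ' (dualCone σ)} ∧
    (∀ τ₁ τ₂ : Set (EuclideanSpace ℝ (Fin m)), IsFaceOf τ₁ σ → IsFaceOf τ₂ σ →
      (τ₁ ⊆ τ₂ ↔ dualCone σ ∩ perpSet τ₂ ⊆ dualCone σ ∩ perpSet τ₁)) := by
  obtain ⟨s, rfl⟩ := isPolyhedralCone_iff.1 hσ
  have hbidual := dualCone_dualCone_of_isClosed _ (PointedCone.isClosed_hull_finset s)
  exact ⟨⟨mapsTo_dualCone_inter_perpSet, injOn_dualCone_inter_perpSet,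
    surjOn_dualCone_inter_perpSet hbidual⟩,
    fun τ₁ τ₂ h₁ h₂ => (dualCone_inter_perpSet_subset_iff h₁ h₂).symm⟩
end

section
/- Let X be a Mori dream space and f : X → Y a contraction (a surjective morphism with connected fibers onto a normal projective variety). Then (ker f_*)^⊥ = f*(N¹(Y)); that is, a divisor class D ∈ N¹(X) satisfies D · γ = 0 for all γ ∈ ker f_* if and only if D lies in the image of f* : N¹(Y) → N¹(X). -/
/-!
STATEMENT 7: Let X be a Mori dream space and f : X → Y a contraction.  Then
(ker f_*)^⊥ = f*(N¹(Y)): a divisor class D ∈ N¹(X) pairs to zero with all of ker f_*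
iff D lies in the image of f* : N¹(Y) → N¹(X).

Numerical formulation: `N1X, N1Y` are the spaces of one-cycles, `DX, DY` the spaces
N¹(X), N¹(Y) of divisor classes, with perfect intersection pairings; `push` = f_* is
surjective, `pull` = f* is injective, and the projection formula holds.
-/

theorem stmt_7
    (DX DY N1X N1Y : Type*)
    [AddCommGroup DX] [Module ℝ DX] [FiniteDimensional ℝ DX]
    [AddCommGroup DY] [Module ℝ DY] [FiniteDimensional ℝ DY]
    [AddCommGroup N1X] [Module ℝ N1X] [FiniteDimensional ℝ N1X]
    [AddCommGroup N1Y] [Module ℝ N1Y] [FiniteDimensional ℝ N1Y]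
    (pairX : DX →ₗ[ℝ] N1X →ₗ[ℝ] ℝ) (pairY : DY →ₗ[ℝ] N1Y →ₗ[ℝ] ℝ)
    -- the pairings are perfect (nondegenerate on both sides)
    (hndX : ∀ D, (∀ γ, pairX D γ = 0) → D = 0)
    (hndX' : ∀ γ, (∀ D, pairX D γ = 0) → γ = 0)
    (hndY : ∀ D, (∀ γ, pairY D γ = 0) → D = 0)
    (hndY' : ∀ γ, (∀ D, pairY D γ = 0) → γ = 0)
    (push : N1X →ₗ[ℝ] N1Y) (pull : DY →ₗ[ℝ] DX)
    (hpush : Function.Surjective push) (hpull : Function.Injective pull)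
    -- projection formula
    (hproj : ∀ (D : DY) (γ : N1X), pairX (pull D) γ = pairY D (push γ)) :
    {D : DX | ∀ γ ∈ LinearMap.ker push, pairX D γ = 0} = Set.range pull := by
  ext D
  simp only [Set.mem_setOf_eq, Set.mem_range]
  constructor
  · intro hD
    -- factor `pairX D` through `push` to get a functional on N1Y
    have hle : LinearMap.ker push ≤ LinearMap.ker (pairX D) := fun γ hγ => hD γ hγ
    let e := push.quotKerEquivOfSurjective hpush
    let φ : N1Y →ₗ[ℝ] ℝ := (Submodule.liftQ _ (pairX D) hle).comp (e.symm : N1Y →ₗ[ℝ] N1X ⧸ LinearMap.ker push)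
    have hφ : ∀ γ : N1X, φ (push γ) = pairX D γ := by
      intro γ
      have : e.symm (push γ) = Submodule.Quotient.mk γ := by
        apply e.injective
        simp [e, LinearMap.quotKerEquivOfSurjective, LinearMap.quotKerEquivRange]
      simp [φ, this]
    -- pairY : DY → Dual N1Y is injective, hence surjective by dimension count
    have hinjY : Function.Injective pairY := by
      rw [injective_iff_map_eq_zero]
      intro a ha
      exact hndY a fun γ => by rw [ha]; rfl
    have hinjY' : Function.Injective pairY.flip := by
      rw [injective_iff_map_eq_zero]
      intro γ hγ
      exact hndY' γ fun E => by rw [show pairY E γ = pairY.flip γ E from rfl, hγ]; rfl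
    have hdim : Module.finrank ℝ DY = Module.finrank ℝ (Module.Dual ℝ N1Y) := by
      have h1 := LinearMap.finrank_le_finrank_of_injective hinjY
      have h2 := LinearMap.finrank_le_finrank_of_injective hinjY'
      rw [Subspace.dual_finrank_eq] at h1 h2
      rw [Subspace.dual_finrank_eq]
      omega
    have hsurj : Function.Surjective pairY :=
      (LinearMap.injective_iff_surjective_of_finrank_eq_finrank hdim).mp hinjY
    obtain ⟨E, hE⟩ := hsurj φ
    refine ⟨E, sub_eq_zero.mp (hndX (pull E - D) fun γ => ?_)⟩
    have : pairX (pull E) γ = pairX D γ := by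
      rw [hproj, hE, hφ]
    simp [map_sub, sub_eq_zero, this]
  · rintro ⟨E, rfl⟩ γ hγ
    rw [hproj, LinearMap.mem_ker.mp hγ, map_zero]
end

section
/- Let X be a smooth projective 4-fold and f : X → Y the blow-up of a smooth point p ∈ Y with exceptional divisor D ≅ ℙ³. Suppose −K_Y · f(l) > 0 for every irreducible curve l ⊂ X with K_X · l ≥ 0, and suppose every extremal ray σ ≠ NE(f) of NE(X) with −K_X · σ > 0 satisfies (−K_X + 3D) · σ > 0. Then −K_Y is ample, i.e. Y is Fano. -/
/-!
STATEMENT 18: Let X be a smooth projective 4-fold and f : X → Y the blow-up of a smooth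
point p ∈ Y with exceptional divisor D ≅ ℙ³.  Suppose −K_Y · f(l) > 0 for every
irreducible curve l ⊂ X with K_X · l ≥ 0, and suppose every extremal ray σ ≠ NE(f) of
NE(X) with −K_X · σ > 0 satisfies (−K_X + 3D) · σ > 0.  Then −K_Y is ample, i.e. Y is
Fano.

Numerical formulation: `inter`-pairings, `pull` = f*, `push` = f_* with the projection
formula; f*(−K_Y) = −K_X + 3D; NE is generated by finitely many extremal rays, each
spanned by the class of an irreducible curve (`irr`); NE(f) = `NEf` is the extremal ray
contracted by f (push vanishes on it).  Ampleness of −K_Y is characterised by Kleiman's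
criterion: −K_Y is ample iff f*(−K_Y) is nef and (f*(−K_Y))^⊥ ∩ NE = NE(f); this
characterisation is passed as the hypothesis `hKleiman` with `AmpleNegKY` the (abstract)
statement that −K_Y is ample.
-/

/-- σ is an extremal ray of the cone NE. -/
def IsExtremalRay {Cur : Type*} [AddCommGroup Cur] [Module ℝ Cur]
    (NE σ : Set Cur) : Prop :=
  σ ⊆ NE ∧ (∃ v : Cur, v ≠ 0 ∧ σ = {x | ∃ c : ℝ, 0 ≤ c ∧ x = c • v}) ∧
    ∀ x ∈ NE, ∀ y ∈ NE, x + y ∈ σ → x ∈ σ ∧ y ∈ σ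

theorem stmt_18
    (DivX DivY CurX CurY : Type*)
    [AddCommGroup DivX] [Module ℝ DivX] [AddCommGroup DivY] [Module ℝ DivY]
    [AddCommGroup CurX] [Module ℝ CurX] [AddCommGroup CurY] [Module ℝ CurY]
    (interX : DivX →ₗ[ℝ] CurX →ₗ[ℝ] ℝ) (interY : DivY →ₗ[ℝ] CurY →ₗ[ℝ] ℝ)
    (pull : DivY →ₗ[ℝ] DivX) (push : CurX →ₗ[ℝ] CurY)
    (hproj : ∀ (B : DivY) (γ : CurX), interX (pull B) γ = interY B (push γ))
    (KX : DivX) (KY : DivY) (D : DivX)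
    -- canonical bundle formula for the blow-up of a point: f*(−K_Y) = −K_X + 3D
    (hcanon : pull (-KY) = -KX + (3 : ℝ) • D)
    (NE : Set CurX) (NEf : Set CurX) (irr : Set CurX)
    -- NE(f) is the extremal ray contracted by f
    (hNEf : IsExtremalRay NE NEf) (hNEfpush : ∀ γ ∈ NEf, push γ = 0)
    -- NE is generated by finitely many extremal rays, each spanned by an irreducible curve
    (n : ℕ) (R : Fin n → Set CurX)
    (hR : ∀ i, IsExtremalRay NE (R i))
    (hRirr : ∀ i, ∃ γ ∈ R i, γ ∈ irr ∧ γ ≠ 0)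
    (hgen : ∀ x ∈ NE, ∃ (c : Fin n → ℝ) (v : Fin n → CurX),
      (∀ i, 0 ≤ c i) ∧ (∀ i, v i ∈ R i) ∧ x = ∑ i, c i • v i)
    -- hypothesis (a): −K_Y · f(l) > 0 for every irreducible curve l with K_X · l ≥ 0
    (ha : ∀ l ∈ irr, 0 ≤ interX KX l → 0 < interY (-KY) (push l))
    -- hypothesis (b): every extremal ray σ ≠ NE(f) with −K_X·σ > 0 has (−K_X + 3D)·σ > 0
    (hb : ∀ σ : Set CurX, IsExtremalRay NE σ → σ ≠ NEf → (∃ γ ∈ σ, 0 < interX (-KX) γ) →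
      ∀ γ ∈ σ, γ ≠ 0 → 0 < interX (-KX + (3 : ℝ) • D) γ)
    -- Kleiman's criterion for ampleness of −K_Y
    (AmpleNegKY : Prop)
    (hKleiman : ((∀ γ ∈ NE, 0 ≤ interX (pull (-KY)) γ) ∧
        {γ ∈ NE | interX (pull (-KY)) γ = 0} = NEf) → AmpleNegKY) :
    AmpleNegKY := by
  set A : CurX →ₗ[ℝ] ℝ := interX (pull (-KY)) with hAdef
  -- pairing vanishes on NEf
  have hAzero : ∀ γ ∈ NEf, A γ = 0 := by
    intro γ hγ
    have : A γ = interY (-KY) (push γ) := hproj _ _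
    rw [this, hNEfpush γ hγ, map_zero]
  -- strict positivity on nonzero elements of rays ≠ NEf
  have hpos : ∀ i, R i ≠ NEf → ∀ γ ∈ R i, γ ≠ 0 → 0 < A γ := by
    intro i hne γ hγ hγ0
    obtain ⟨γ₀, hγ₀R, hγ₀irr, hγ₀0⟩ := hRirr i
    have hAγ₀ : 0 < A γ₀ := by
      by_cases hk : 0 ≤ interX KX γ₀
      · have h1 := ha γ₀ hγ₀irr hk
        have : A γ₀ = interY (-KY) (push γ₀) := hproj _ _
        rw [this]; exact h1
      · have hk' : 0 < interX (-KX) γ₀ := by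
          rw [map_neg]
          simpa using (not_le.mp hk)
        have h2 := hb (R i) (hR i) hne ⟨γ₀, hγ₀R, hk'⟩ γ₀ hγ₀R hγ₀0
        rw [hAdef, hcanon]; exact h2
    -- γ is a positive multiple of γ₀
    obtain ⟨_, ⟨v, hv0, hvdesc⟩, _⟩ := hR i
    rw [hvdesc] at hγ hγ₀R
    obtain ⟨c, hc, rfl⟩ := hγ
    obtain ⟨c₀, hc₀, hγ₀eq⟩ := hγ₀R
    have hc0 : c ≠ 0 := by rintro rfl; simp at hγ0
    have hc₀0 : c₀ ≠ 0 := by rintro rfl; simp [hγ₀eq] at hγ₀0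
    have hveq : v = c₀⁻¹ • γ₀ := by
      rw [hγ₀eq, smul_smul, inv_mul_cancel₀ hc₀0, one_smul]
    rw [hveq, map_smul, map_smul, smul_eq_mul, smul_eq_mul]
    have hcpos : 0 < c := lt_of_le_of_ne hc (Ne.symm hc0)
    have hc₀pos : 0 < c₀ := lt_of_le_of_ne hc₀ (Ne.symm hc₀0)
    positivity
  -- nonnegativity of each generator pairing
  have hAv : ∀ i, ∀ γ ∈ R i, 0 ≤ A γ := by
    intro i γ hγ
    by_cases hne : R i = NEf
    · exact le_of_eq (hAzero γ (hne ▸ hγ)).symm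
    · by_cases hγ0 : γ = 0
      · simp [hγ0]
      · exact le_of_lt (hpos i hne γ hγ hγ0)
  -- nefness
  have hnef : ∀ γ ∈ NE, 0 ≤ A γ := by
    intro x hx
    obtain ⟨c, v, hc, hv, rfl⟩ := hgen x hx
    rw [map_sum]
    refine Finset.sum_nonneg fun i _ => ?_
    rw [map_smul, smul_eq_mul]
    exact mul_nonneg (hc i) (hAv i (v i) (hv i))
  -- NEf is closed under nonneg scaling and addition via its spanning vector
  obtain ⟨hNEfsub, ⟨w, hw0, hwdesc⟩, _⟩ := hNEf
  apply hKleiman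
  refine ⟨hnef, ?_⟩
  ext x
  constructor
  · rintro ⟨hx, hx0⟩
    obtain ⟨c, v, hc, hv, rfl⟩ := hgen x hx
    rw [map_sum] at hx0
    have hterm : ∀ i ∈ Finset.univ, (0:ℝ) ≤ A (c i • v i) := by
      intro i _
      rw [map_smul, smul_eq_mul]
      exact mul_nonneg (hc i) (hAv i (v i) (hv i))
    have hzero : ∀ i ∈ Finset.univ, A (c i • v i) = 0 :=
      (Finset.sum_eq_zero_iff_of_nonneg hterm).mp hx0
    -- each term lies in NEf, i.e. is a nonneg multiple of w
    have hmem : ∀ i, ∃ d : ℝ, 0 ≤ d ∧ c i • v i = d • w := by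
      intro i
      by_cases hne : R i = NEf
      · have hvi : v i ∈ NEf := hne ▸ hv i
        rw [hwdesc] at hvi
        obtain ⟨d, hd, hdeq⟩ := hvi
        exact ⟨c i * d, mul_nonneg (hc i) hd, by rw [hdeq, smul_smul]⟩
      · by_cases hvz : v i = 0
        · exact ⟨0, le_refl 0, by simp [hvz]⟩
        · have hApos := hpos i hne (v i) (hv i) hvz
          have := hzero i (Finset.mem_univ i)
          rw [map_smul, smul_eq_mul] at this
          have hci : c i = 0 := by
            rcases mul_eq_zero.mp this with h | h
            · exact h
            · exact absurd h (ne_of_gt hApos)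
          exact ⟨0, le_refl 0, by simp [hci]⟩
    choose d hd hdeq using hmem
    have : ∑ i, c i • v i = (∑ i, d i) • w := by
      rw [Finset.sum_smul]
      exact Finset.sum_congr rfl fun i _ => hdeq i
    rw [hwdesc]
    exact ⟨∑ i, d i, Finset.sum_nonneg fun i _ => hd i, this⟩
  · intro hx
    exact ⟨hNEfsub hx, hAzero x hx⟩
end
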